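/- For a function v : Q(N) → ℝ with Möbius transform m, any (S,T) ∈ Q(N) with (S,T) ≠ (∅,∅), and any (K,L) ∈ Q(N\S) with L ⊇ T, the (S,T)-derivative Δ_{S,T}v(K,L) = ∑_{S'⊆S, T'⊆T} (-1)^{(|S|-|S'|)+(|T|-|T'|)} v(K∪S', L\T') equals ∑_{(S',T') ∈ [(S, N\(S∪T)), (S∪K, L\T)]} m(S',T'), the interval being taken in the lattice order ⊑. -/

import Mathlib

/-!
Expand every `biMobius v P Q` and exchange the order of summation. For fixed `(B, B')` the
pairs `(P, Q)` of the interval that contribute `v (B, B')` range over a product of two Boolean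
intervals, `[S ∪ B, (S ∪ K) \ B']` and `[L \ T, B' \ (S ∪ T)]`, and the signs are alternating on
each, so the coefficient vanishes unless both intervals are single points. That happens exactly
when `B = K ∪ S'` and `B' = L \ T'` with `S' ⊆ S`, `T' ⊆ T`, and the surviving sign is the one
of the finite difference.
-/

open Finset

/-- The Möbius transform of a function on Q(N). -/
def biMobius {V : Type*} [Fintype V] [DecidableEq V]
    (v : Finset V × Finset V → ℝ) (A A' : Finset V) : ℝ :=
  ∑ B ∈ A.powerset, ∑ B' ∈ (Aᶜ).powerset.filter (fun B' => A' ⊆ B'),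
    (-1 : ℝ) ^ ((A \ B).card + (B' \ A').card) * v (B, B')

namespace Finset

variable {α : Type*} [DecidableEq α] {s t u c : Finset α}

section Reindex

variable {M : Type*} [AddCommMonoid M]

theorem sum_powerset_union_eq_sum_Icc {k : Finset α} (h : Disjoint k s) (f : Finset α → M) :
    ∑ u ∈ s.powerset, f (k ∪ u) = ∑ u ∈ Icc k (s ∪ k), f u := by
  rw [Icc_eq_image_powerset subset_union_right, union_sdiff_right, h.symm.sdiff_eq_left,
    sum_image fun r hr r' hr' hrr' => ?_]
  rw [← union_sdiff_cancel_left (h.mono_right (mem_powerset.1 hr)),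
    ← union_sdiff_cancel_left (h.mono_right (mem_powerset.1 hr'))]
  exact congrArg (· \ k) hrr'

theorem sum_powerset_sdiff_eq_sum_Icc {l : Finset α} (h : t ⊆ l) (f : Finset α → M) :
    ∑ u ∈ t.powerset, f (l \ u) = ∑ u ∈ Icc (l \ t) l, f u := by
  refine sum_nbij' (l \ ·) (l \ ·) (fun u hu => ?_) (fun u hu => ?_) (fun u hu => ?_)
    (fun u hu => ?_) (fun _ _ => rfl)
  all_goals simp only [mem_powerset, mem_Icc] at hu ⊢
  · exact ⟨sdiff_subset_sdiff subset_rfl hu, sdiff_subset⟩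
  · rw [← sdiff_sdiff_eq_self h]
    exact sdiff_subset_sdiff subset_rfl hu.1
  · exact sdiff_sdiff_eq_self (hu.trans h)
  · exact sdiff_sdiff_eq_self hu.2

end Reindex

variable {R : Type*} [Ring R]

theorem neg_one_pow_card_sdiff_mul_neg_one_pow_card_sdiff (hts : t ⊆ s) (hut : u ⊆ t) :
    (-1 : R) ^ #(s \ t) * (-1) ^ #(t \ u) = (-1) ^ #(s \ u) := by
  rw [← pow_add, ← card_union_of_disjoint (disjoint_sdiff_self_left.mono_right sdiff_subset),
    sdiff_union_sdiff_cancel hts hut]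

theorem sum_Icc_neg_one_pow_card_sdiff (s t : Finset α) :
    ∑ u ∈ Icc s t, (-1 : R) ^ #(u \ s) = if s = t then 1 else 0 := by
  by_cases hst : s ⊆ t
  · have hsign := congrArg (Int.cast : ℤ → R) (sum_powerset_neg_one_pow_card (x := t \ s))
    push_cast at hsign
    have hreindex := sum_powerset_union_eq_sum_Icc (disjoint_sdiff_self_right (x := s) (y := t))
      fun u => (-1 : R) ^ #(u \ s)
    rw [sdiff_union_of_subset hst] at hreindex
    rw [← hreindex, sum_congr rfl fun u hu => by
      rw [union_sdiff_cancel_left (disjoint_sdiff_self_right.mono_right (mem_powerset.1 hu))],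
      hsign]
    refine if_congr ?_ rfl rfl
    rw [sdiff_eq_empty_iff_subset, Subset.antisymm_iff, and_iff_right hst]
  · rw [Icc_eq_empty (by simpa using hst), sum_empty, if_neg (by rintro rfl; exact hst subset_rfl)]

theorem sum_Icc_neg_one_pow_card_sdiff_left (hcs : c ⊆ s) :
    ∑ u ∈ Icc s t, (-1 : R) ^ #(u \ c) = if s = t then (-1) ^ #(s \ c) else 0 := by
  rw [← boole_mul, ← sum_Icc_neg_one_pow_card_sdiff, sum_mul]
  refine sum_congr rfl fun u hu => ?_
  rw [neg_one_pow_card_sdiff_mul_neg_one_pow_card_sdiff (mem_Icc.1 hu).1 hcs]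

theorem sum_Icc_neg_one_pow_card_sdiff_right (htc : t ⊆ c) :
    ∑ u ∈ Icc s t, (-1 : R) ^ #(c \ u) = if s = t then (-1) ^ #(c \ t) else 0 := by
  have hsq (n : ℕ) : (-1 : R) ^ n * (-1) ^ n = 1 := by
    rw [← pow_add]
    exact Even.neg_one_pow ⟨n, rfl⟩
  have hsplit : ∀ u ∈ Icc s t, (-1 : R) ^ #(c \ u) = (-1) ^ #(c \ s) * (-1) ^ #(u \ s) :=
    fun u hu => by
    obtain ⟨hsu, hut⟩ := mem_Icc.1 hu
    rw [← neg_one_pow_card_sdiff_mul_neg_one_pow_card_sdiff (hut.trans htc) hsu, mul_assoc,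
      hsq, mul_one]
  rw [sum_congr rfl hsplit, ← mul_sum, sum_Icc_neg_one_pow_card_sdiff, mul_boole]
  split_ifs with hst
  · rw [hst]
  · rfl

end Finset

section Bicapacity

variable {V : Type*} [DecidableEq V] {S T K L : Finset V}

theorem sum_Icc_prod_Icc_neg_one_pow (hKL : Disjoint K L) (hKS : Disjoint K S)
    (hLS : Disjoint L S) (hTL : T ⊆ L) (B B' : Finset V) :
    ∑ p ∈ Icc (S ∪ B) ((S ∪ K) \ B') ×ˢ Icc (L \ T) (B' \ (S ∪ T)),
        (-1 : ℝ) ^ (#(p.1 \ B) + #(B' \ p.2)) =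
      if (B, B') ∈ Icc K (S ∪ K) ×ˢ Icc (L \ T) L then
        (-1) ^ (#(S \ B) + #(B' \ (L \ T))) else 0 := by
  have hbounds : (S ∪ B = (S ∪ K) \ B' ∧ L \ T = B' \ (S ∪ T)) ↔
      (B, B') ∈ Icc K (S ∪ K) ×ˢ Icc (L \ T) L := by
    simp only [mem_product, mem_Icc]
    simp only [subset_iff, disjoint_left, Finset.ext_iff, mem_union, mem_sdiff] at *
    grind
  simp only [sum_product, pow_add]
  rw [← sum_mul_sum, sum_Icc_neg_one_pow_card_sdiff_left subset_union_right,
    sum_Icc_neg_one_pow_card_sdiff_right sdiff_subset, ite_zero_mul_ite_zero]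
  split_ifs with h h' h'
  · rw [h.2, union_sdiff_right]
  · exact absurd (hbounds.1 h) h'
  · exact absurd (hbounds.2 h') h
  · rfl

theorem sum_biMobius_eq_sum_Icc_prod_Icc [Fintype V] (v : Finset V × Finset V → ℝ)
    (hKL : Disjoint K L) (hKS : Disjoint K S) (hLS : Disjoint L S) (hTL : T ⊆ L) :
    ∑ p ∈ univ.filter (fun p : Finset V × Finset V =>
          Disjoint p.1 p.2 ∧ S ⊆ p.1 ∧ p.2 ⊆ (S ∪ T)ᶜ ∧ p.1 ⊆ S ∪ K ∧ L \ T ⊆ p.2),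
        biMobius v p.1 p.2 =
      ∑ x ∈ Icc K (S ∪ K) ×ˢ Icc (L \ T) L,
        (-1 : ℝ) ^ (#(S \ x.1) + #(x.2 \ (L \ T))) * v x := by
  simp only [biMobius, ← sum_product']
  rw [sum_comm' (t' := univ)
    (s' := fun x => Icc (S ∪ x.1) ((S ∪ K) \ x.2) ×ˢ Icc (L \ T) (x.2 \ (S ∪ T))) ?swap]
  · simp only [← sum_mul, sum_Icc_prod_Icc_neg_one_pow hKL hKS hLS hTL, ite_zero_mul]
    rw [sum_ite_mem, univ_inter]
  · intro p x
    simp only [mem_filter, mem_univ, true_and, and_true, mem_product, mem_powerset, mem_Icc]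
    simp only [subset_iff, disjoint_left, mem_union, mem_sdiff, mem_compl]
    grind

end Bicapacity

theorem stmt_16_general (V : Type*) [Fintype V] [DecidableEq V]
    (v : Finset V × Finset V → ℝ) (S T K L : Finset V)
    (hKL : Disjoint K L) (hKS : Disjoint K S) (hLS : Disjoint L S)
    (hTL : T ⊆ L) :
    ∑ S' ∈ S.powerset, ∑ T' ∈ T.powerset,
        (-1 : ℝ) ^ ((S.card - S'.card) + (T.card - T'.card)) * v (K ∪ S', L \ T') =
      ∑ p ∈ univ.filter (fun p : Finset V × Finset V =>
          Disjoint p.1 p.2 ∧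
          S ⊆ p.1 ∧ p.2 ⊆ (S ∪ T)ᶜ ∧
          p.1 ⊆ S ∪ K ∧ L \ T ⊆ p.2),
        biMobius v p.1 p.2 := by
  rw [sum_biMobius_eq_sum_Icc_prod_Icc v hKL hKS hLS hTL, sum_product,
    ← sum_powerset_union_eq_sum_Icc hKS]
  refine sum_congr rfl fun S' hS' => ?_
  rw [← sum_powerset_sdiff_eq_sum_Icc hTL]
  refine sum_congr rfl fun T' hT' => ?_
  dsimp only
  rw [sdiff_union_distrib, hKS.symm.sdiff_eq_left, inter_eq_right.2 sdiff_subset,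
    sdiff_sdiff_sdiff_cancel_left hTL, card_sdiff_of_subset (mem_powerset.1 hS'),
    card_sdiff_of_subset (mem_powerset.1 hT')]

/-- the (S,T)-derivative Δ_{S,T}v(K,L) equals the sum of the
Möbius transform over the interval [(S, N\(S∪T)), (S∪K, L\T)] of Q(N). -/
theorem stmt_16 (V : Type*) [Fintype V] [DecidableEq V]
    (v : Finset V × Finset V → ℝ) (S T K L : Finset V)
    (hST : Disjoint S T) (hSTne : (S, T) ≠ ((∅ : Finset V), (∅ : Finset V)))
    (hKL : Disjoint K L) (hKS : Disjoint K S) (hLS : Disjoint L S)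
    (hTL : T ⊆ L) :
    ∑ S' ∈ S.powerset, ∑ T' ∈ T.powerset,
        (-1 : ℝ) ^ ((S.card - S'.card) + (T.card - T'.card)) * v (K ∪ S', L \ T') =
      ∑ p ∈ univ.filter (fun p : Finset V × Finset V =>
          Disjoint p.1 p.2 ∧
          S ⊆ p.1 ∧ p.2 ⊆ (S ∪ T)ᶜ ∧
          p.1 ⊆ S ∪ K ∧ L \ T ⊆ p.2),
        biMobius v p.1 p.2 :=
  stmt_16_general V v S T K L hKL hKS hLS hTL
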